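/- arXiv:1504.04682 — 2 statements merged into one kernel-verified Lean document; each statement's English description precedes it below -/
import Mathlib

section
/- The ratio (e^x − c_s)/F(x) tends to 0 as x → +∞. -/
/-! With `k = √(2μ/σ²)` and `p = r/μ - 1 > -1`, `F x` is the value at `a = k (x - θ)` of
`G a = ∫₀^∞ u^p exp(a u - u²/2) du`. Restricting the integral to `[L, L + 1]` gives
`G a ≥ c exp(L a)` for `a ≥ 0`, so `G` outgrows every exponential, in particular
`e^x = e^θ exp(a / k)`. The constant `c_s` does not matter since `e^x → ∞`. -/

open Real MeasureTheory Set Filter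

noncomputable def tiltedGaussianMoment (p a : ℝ) : ℝ :=
  ∫ u in Ioi (0 : ℝ), u ^ p * exp (a * u - u ^ 2 / 2)

lemma integrableOn_rpow_mul_exp_mul_sub_sq {p : ℝ} (hp : -1 < p) (a : ℝ) :
    IntegrableOn (fun u : ℝ => u ^ p * exp (a * u - u ^ 2 / 2)) (Ioi 0) := by
  have hGamma : IntegrableOn (fun u : ℝ => exp (-u) * u ^ ((p + 1) - 1)) (Ioi 0) :=
    GammaIntegral_convergent (by linarith)
  refine (hGamma.const_mul (exp ((a + 1) ^ 2 / 2))).mono' ?_ ?_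
  · refine ContinuousOn.aestronglyMeasurable ?_ measurableSet_Ioi
    exact (continuousOn_id.rpow_const fun u hu => Or.inl (ne_of_gt hu)).mul (by fun_prop)
  · filter_upwards [ae_restrict_mem measurableSet_Ioi] with u (hu : 0 < u)
    have hexp : exp (a * u - u ^ 2 / 2) ≤ exp ((a + 1) ^ 2 / 2) * exp (-u) := by
      rw [← exp_add, exp_le_exp]
      nlinarith [sq_nonneg (u - (a + 1))]
    rw [norm_of_nonneg (by positivity), add_sub_cancel_right]
    calc u ^ p * exp (a * u - u ^ 2 / 2) ≤ u ^ p * (exp ((a + 1) ^ 2 / 2) * exp (-u)) := by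
          gcongr
      _ = exp ((a + 1) ^ 2 / 2) * (exp (-u) * u ^ p) := by ring

lemma exists_pos_mul_exp_le_tiltedGaussianMoment {p L : ℝ} (hp : -1 < p) (hL : 0 < L) :
    ∃ c > 0, ∀ a, 0 ≤ a → c * exp (L * a) ≤ tiltedGaussianMoment p a := by
  obtain ⟨u₀, hu₀, hmin⟩ := isCompact_Icc.exists_isMinOn (nonempty_Icc.2 (by linarith : L ≤ L + 1))
    ((continuousOn_id.rpow_const fun u hu => Or.inl (ne_of_gt (hL.trans_le hu.1))) :
      ContinuousOn (fun u : ℝ => u ^ p) (Icc L (L + 1)))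
  have hsub : Icc L (L + 1) ⊆ Ioi 0 := fun u hu => hL.trans_le hu.1
  refine ⟨u₀ ^ p * exp (-(L + 1) ^ 2 / 2), mul_pos (rpow_pos_of_pos (hsub hu₀) p) (exp_pos _),
    fun a ha => ?_⟩
  have hint := integrableOn_rpow_mul_exp_mul_sub_sq hp a
  have hbound : ∀ u ∈ Icc L (L + 1),
      u₀ ^ p * exp (-(L + 1) ^ 2 / 2) * exp (L * a) ≤ u ^ p * exp (a * u - u ^ 2 / 2) := by
    intro u hu
    rw [mul_assoc, ← exp_add]
    exact mul_le_mul (hmin hu) (exp_le_exp.2 (by nlinarith [hu.1, hu.2])) (exp_pos _).le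
      (rpow_nonneg (hsub hu).le p)
  calc u₀ ^ p * exp (-(L + 1) ^ 2 / 2) * exp (L * a)
      = u₀ ^ p * exp (-(L + 1) ^ 2 / 2) * exp (L * a) * volume.real (Icc L (L + 1)) := by
        rw [volume_real_Icc_of_le (by linarith), add_sub_cancel_left, mul_one]
    _ ≤ ∫ u in Icc L (L + 1), u ^ p * exp (a * u - u ^ 2 / 2) :=
        setIntegral_ge_of_const_le_real measurableSet_Icc measure_Icc_lt_top.ne hbound
          (hint.mono_set hsub)
    _ ≤ tiltedGaussianMoment p a := by
        refine setIntegral_mono_set hint ?_ hsub.eventuallyLE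
        filter_upwards [ae_restrict_mem measurableSet_Ioi] with u (hu : 0 < u)
        positivity

lemma tendsto_exp_mul_div_tiltedGaussianMoment_atTop {p : ℝ} (hp : -1 < p) (b : ℝ) :
    Tendsto (fun a => exp (b * a) / tiltedGaussianMoment p a) atTop (nhds 0) := by
  obtain ⟨c, hc, hlow⟩ :=
    exists_pos_mul_exp_le_tiltedGaussianMoment hp (by positivity : 0 < |b| + 1)
  have hdecay : Tendsto (fun a => c⁻¹ * exp ((b - (|b| + 1)) * a)) atTop (nhds 0) := by
    simpa using (tendsto_exp_atBot.comp (tendsto_id.const_mul_atTop_of_neg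
      (by linarith [le_abs_self b] : b - (|b| + 1) < 0))).const_mul c⁻¹
  refine squeeze_zero' ?_ ?_ hdecay
  · filter_upwards [eventually_ge_atTop 0] with a ha
    exact div_nonneg (exp_pos _).le ((by positivity : 0 ≤ c * exp _).trans (hlow a ha))
  · filter_upwards [eventually_ge_atTop 0] with a ha
    calc exp (b * a) / tiltedGaussianMoment p a ≤ exp (b * a) / (c * exp ((|b| + 1) * a)) :=
          div_le_div_of_nonneg_left (exp_pos _).le (by positivity) (hlow a ha)
      _ = c⁻¹ * exp ((b - (|b| + 1)) * a) := by
          rw [sub_mul, exp_sub]; field_simp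

lemma tendsto_exp_sub_div_atTop_of_tendsto_exp_div {f : ℝ → ℝ}
    (hf : Tendsto (fun x => exp x / f x) atTop (nhds 0)) (c : ℝ) :
    Tendsto (fun x => (exp x - c) / f x) atTop (nhds 0) := by
  have hfactor : Tendsto (fun x => 1 - c * exp (-x)) atTop (nhds 1) := by
    simpa using (tendsto_exp_neg_atTop_nhds_zero.const_mul c).const_sub 1
  have := hf.mul hfactor
  rw [zero_mul] at this
  refine this.congr fun x => ?_
  rw [exp_neg, div_mul_eq_mul_div, mul_sub, mul_one, mul_left_comm,
    mul_inv_cancel₀ (exp_pos x).ne', mul_one]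

theorem stmt8_general
    (μ σ θ r c_s : ℝ)
    (hμ : 0 < μ) (hσ : 0 < σ) (hr : 0 < r)
    (F : ℝ → ℝ)
    (hF : ∀ x : ℝ, F x = ∫ u in Ioi (0:ℝ),
        u ^ (r / μ - 1) * Real.exp (Real.sqrt (2 * μ / σ ^ 2) * (x - θ) * u - u ^ 2 / 2)) :
    Filter.Tendsto (fun x => (Real.exp x - c_s) / F x) Filter.atTop (nhds 0) := by
  set k := √(2 * μ / σ ^ 2)
  have hk : 0 < k := sqrt_pos.2 (by positivity)
  have hp : -1 < r / μ - 1 := by linarith [div_pos hr hμ]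
  have hlin : Tendsto (fun x => k * (x - θ)) atTop atTop := by
    simpa only [sub_eq_add_neg, id] using
      (tendsto_atTop_add_const_right _ (-θ) tendsto_id).const_mul_atTop hk
  have hmoment := ((tendsto_exp_mul_div_tiltedGaussianMoment_atTop hp k⁻¹).comp hlin).const_mul
    (exp θ)
  rw [mul_zero] at hmoment
  refine tendsto_exp_sub_div_atTop_of_tendsto_exp_div (hmoment.congr fun x => ?_) c_s
  rw [Function.comp_apply, hF x, tiltedGaussianMoment, inv_mul_cancel_left₀ hk.ne', mul_div_assoc',
    ← exp_add, add_sub_cancel]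

/-- (e^x − c_s)/F(x) → 0 as x → +∞. -/
theorem stmt8
    (μ σ θ r c_s c_b : ℝ)
    (hμ : 0 < μ) (hσ : 0 < σ) (hr : 0 < r) (hcs : 0 < c_s) (hcb : 0 < c_b)
    (F : ℝ → ℝ)
    (hF : ∀ x : ℝ, F x = ∫ u in Ioi (0:ℝ),
        u ^ (r / μ - 1) * Real.exp (Real.sqrt (2 * μ / σ ^ 2) * (x - θ) * u - u ^ 2 / 2)) :
    Filter.Tendsto (fun x => (Real.exp x - c_s) / F x) Filter.atTop (nhds 0) :=
  stmt8_general μ σ θ r c_s hμ hσ hr F hF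
end

section
/- The derivative H'(z) tends to 0 as z → +∞. -/
/-!
Write `F x = J (k (x - θ))` and `G x = J (k (θ - x))`, where `J = cylinderIntegral p`,
`p = r / μ - 1 > -1` and `k = √(2μ/σ²)`; then `F, G > 0` and `F' > 0 > G'`. By the inverse
function rule, at `x = ψ⁻¹ z` the derivative `H' z` is the ratio of Wronskians
`W(G, eˣ - c_s) / W(G, F)`, which for `eˣ ≥ c_s` lies in `[0, eˣ / F x + eˣ / F' x]`. Both bounds
vanish as `x → ∞` because `J t ≥ m e^{ct}` for any `c > 0`, and `ψ⁻¹ z → ∞` as `z → ∞`.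
-/

open Real MeasureTheory Set Filter Topology

section RightInverse

variable {α β : Type*} [LinearOrder α] [LinearOrder β] {ψ : α → β} {g : β → α}

lemma StrictMono.tendsto_atTop_of_eventually_rightInverse (hψ : StrictMono ψ)
    (hg : ∀ᶠ y in atTop, ψ (g y) = y) : Tendsto g atTop atTop :=
  Filter.tendsto_atTop.2 fun b => by
    filter_upwards [hg, eventually_ge_atTop (ψ b)] with y hy hby
    exact hψ.le_iff_le.1 (hby.trans_eq hy.symm)

lemma StrictMono.continuousAt_of_eventually_rightInverse [TopologicalSpace α] [OrderTopology α]
    [TopologicalSpace β] [OrderTopology β] {z : β} (hψ : StrictMono ψ)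
    (hg : ∀ᶠ y in 𝓝 z, ψ (g y) = y) : ContinuousAt g z := by
  have hz : ψ (g z) = z := hg.self_of_nhds
  refine tendsto_order.2 ⟨fun a ha => ?_, fun b hb => ?_⟩
  · filter_upwards [hg, Ioi_mem_nhds (hz ▸ hψ ha)] with y hy hay
    exact hψ.lt_iff_lt.1 (hay.trans_eq hy.symm)
  · filter_upwards [hg, Iio_mem_nhds (hz ▸ hψ hb)] with y hy hyb
    exact hψ.lt_iff_lt.1 (hy.trans_lt hyb)

end RightInverse

lemma wronskian_div_mem_Icc {e c f g f' g' : ℝ} (hc : 0 ≤ c) (hce : c ≤ e) (hf : 0 < f)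
    (hg : 0 < g) (hf' : 0 < f') (hg' : g' < 0) :
    (e * g - (e - c) * g') / (f' * g - f * g') ∈ Icc 0 (e / f + e / f') := by
  have hW₁ : f' * g < f' * g - f * g' := by nlinarith
  have hW₂ : -(f * g') < f' * g - f * g' := by nlinarith
  refine ⟨div_nonneg (by nlinarith) (by linarith), ?_⟩
  calc (e * g - (e - c) * g') / (f' * g - f * g')
      ≤ (e * g + e * -g') / (f' * g - f * g') :=
        div_le_div_of_nonneg_right (by nlinarith [mul_nonneg hc (neg_nonneg.2 hg'.le)])
          (by linarith)
    _ = e * g / (f' * g - f * g') + e * -g' / (f' * g - f * g') := add_div _ _ _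
    _ ≤ e * g / (f' * g) + e * -g' / -(f * g') := by
        have he : 0 ≤ e := hc.trans hce
        gcongr <;> nlinarith
    _ = e / f + e / f' := by field_simp [hg.ne', hg'.ne]; ring

theorem tendsto_deriv_exp_sub_div_comp_rightInverse {F G F' G' ψ ψinv H : ℝ → ℝ} {c : ℝ}
    (hc : 0 ≤ c) (hF : ∀ x, HasDerivAt F (F' x) x) (hG : ∀ x, HasDerivAt G (G' x) x)
    (hF₀ : ∀ x, 0 < F x) (hG₀ : ∀ x, 0 < G x) (hF'₀ : ∀ x, 0 < F' x) (hG'₀ : ∀ x, G' x < 0)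
    (hψ : ∀ x, ψ x = F x / G x) (hinv : ∀ z, 0 < z → ψ (ψinv z) = z)
    (hH : ∀ z, 0 < z → H z = (exp (ψinv z) - c) / G (ψinv z))
    (hFlim : Tendsto (fun x => exp x / F x) atTop (𝓝 0))
    (hF'lim : Tendsto (fun x => exp x / F' x) atTop (𝓝 0)) :
    Tendsto (deriv H) atTop (𝓝 0) := by
  have hW : ∀ x, 0 < F' x * G x - F x * G' x := fun x => by
    nlinarith [mul_pos (hF'₀ x) (hG₀ x), mul_pos (hF₀ x) (neg_pos.2 (hG'₀ x))]
  have hψ' : ∀ x, HasDerivAt ψ ((F' x * G x - F x * G' x) / G x ^ 2) x := fun x =>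
    ((hF x).div (hG x) (hG₀ x).ne').congr_of_eventuallyEq (Eventually.of_forall hψ)
  have hψ'₀ : ∀ x, 0 < (F' x * G x - F x * G' x) / G x ^ 2 := fun x =>
    div_pos (hW x) (pow_pos (hG₀ x) 2)
  have hmono : StrictMono ψ := strictMono_of_hasDerivAt_pos hψ' hψ'₀
  have hderiv : ∀ z, 0 < z → deriv H z = (exp (ψinv z) * G (ψinv z) - (exp (ψinv z) - c) *
      G' (ψinv z)) / (F' (ψinv z) * G (ψinv z) - F (ψinv z) * G' (ψinv z)) := by
    intro z hz
    have hinv_nhds : ∀ᶠ y in 𝓝 z, ψ (ψinv y) = y := eventually_of_mem (Ioi_mem_nhds hz) hinv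
    have hψinv := (hψ' (ψinv z)).of_local_left_inverse
      (hmono.continuousAt_of_eventually_rightInverse hinv_nhds) (hψ'₀ _).ne' hinv_nhds
    have hnum := ((hasDerivAt_exp (ψinv z)).sub_const c).div (hG _) (hG₀ _).ne'
    rw [((hnum.comp z hψinv).congr_of_eventuallyEq
      (eventually_of_mem (Ioi_mem_nhds hz) hH)).deriv]
    field_simp [(hG₀ (ψinv z)).ne', (hW (ψinv z)).ne']
  have hψinv_lim : Tendsto ψinv atTop atTop :=
    hmono.tendsto_atTop_of_eventually_rightInverse ((eventually_gt_atTop 0).mono hinv)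
  have hbound : ∀ᶠ z in atTop, deriv H z ∈
      Icc 0 (exp (ψinv z) / F (ψinv z) + exp (ψinv z) / F' (ψinv z)) := by
    filter_upwards [eventually_gt_atTop 0,
      (tendsto_exp_atTop.comp hψinv_lim).eventually (eventually_ge_atTop c)] with z hz hcz
    rw [hderiv z hz]
    exact wronskian_div_mem_Icc hc hcz (hF₀ _) (hG₀ _) (hF'₀ _) (hG'₀ _)
  have hupper := (hFlim.add hF'lim).comp hψinv_lim
  rw [add_zero] at hupper
  exact tendsto_of_tendsto_of_tendsto_of_le_of_le' tendsto_const_nhds hupper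
    (hbound.mono fun _ h => h.1) (hbound.mono fun _ h => h.2)

noncomputable section

def cylinderIntegrand (p t u : ℝ) : ℝ := u ^ p * exp (t * u - u ^ 2 / 2)

/-- `cylinderIntegral p t = Γ(p+1) e^{t²/4} D_{-(p+1)}(-t)`, with `D_ν` the parabolic cylinder
function. -/
def cylinderIntegral (p t : ℝ) : ℝ := ∫ u in Ioi 0, cylinderIntegrand p t u

end

section CylinderIntegral

variable {p : ℝ}

lemma measurable_cylinderIntegrand (p t : ℝ) : Measurable (cylinderIntegrand p t) := by
  unfold cylinderIntegrand
  fun_prop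

lemma cylinderIntegrand_pos (p t : ℝ) {u : ℝ} (hu : 0 < u) : 0 < cylinderIntegrand p t u :=
  mul_pos (rpow_pos_of_pos hu p) (exp_pos _)

lemma integrableOn_cylinderIntegrand (hp : -1 < p) (t : ℝ) :
    IntegrableOn (cylinderIntegrand p t) (Ioi 0) := by
  refine (((integrableOn_rpow_mul_exp_neg_mul_sq (b := 4⁻¹) (by norm_num) hp).const_mul
    (exp (t ^ 2)))).mono' (measurable_cylinderIntegrand p t).aestronglyMeasurable ?_
  filter_upwards [ae_restrict_mem measurableSet_Ioi] with u (hu : 0 < u)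
  rw [norm_of_nonneg (cylinderIntegrand_pos p t hu).le, cylinderIntegrand, mul_left_comm,
    ← exp_add]
  gcongr
  nlinarith [sq_nonneg (t - u / 2)]

lemma cylinderIntegral_pos (hp : -1 < p) (t : ℝ) : 0 < cylinderIntegral p t := by
  have hsupp : Function.support (cylinderIntegrand p t) ∩ Ioi 0 = Ioi 0 :=
    inter_eq_right.2 fun u hu => (cylinderIntegrand_pos p t hu).ne'
  rw [cylinderIntegral, setIntegral_pos_iff_support_of_nonneg_ae ?_
    (integrableOn_cylinderIntegrand hp t), hsupp]
  · simp
  · filter_upwards [ae_restrict_mem measurableSet_Ioi] with u hu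
    exact (cylinderIntegrand_pos p t hu).le

lemma exists_exp_mul_le_cylinderIntegral (hp : -1 < p) {c : ℝ} (hc : 0 < c) :
    ∃ m > 0, ∀ t ≥ 0, m * exp (c * t) ≤ cylinderIntegral p t := by
  set m := min (c ^ p) ((c + 1) ^ p) * exp (-(c + 1) ^ 2 / 2)
  refine ⟨m, by positivity, fun t ht => ?_⟩
  have hsub : Ioc c (c + 1) ⊆ Ioi 0 := fun u hu => hc.trans hu.1
  have hbound : ∀ u ∈ Ioc c (c + 1), m * exp (c * t) ≤ cylinderIntegrand p t u := by
    rintro u ⟨hcu, huc⟩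
    have hu : 0 < u := hc.trans hcu
    have hpow : min (c ^ p) ((c + 1) ^ p) ≤ u ^ p := by
      rcases le_or_gt 0 p with hp0 | hp0
      · exact (min_le_left _ _).trans (rpow_le_rpow hc.le hcu.le hp0)
      · exact (min_le_right _ _).trans (rpow_le_rpow_of_nonpos hu huc hp0.le)
    have hexp : exp (-(c + 1) ^ 2 / 2) * exp (c * t) ≤ exp (t * u - u ^ 2 / 2) := by
      rw [← exp_add, exp_le_exp]
      nlinarith [mul_le_mul_of_nonneg_left hcu.le ht]
    rw [mul_assoc]
    exact mul_le_mul hpow hexp (by positivity) (rpow_nonneg hu.le p)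
  calc m * exp (c * t) = m * exp (c * t) * volume.real (Ioc c (c + 1)) := by simp
    _ ≤ ∫ u in Ioc c (c + 1), cylinderIntegrand p t u :=
      setIntegral_ge_of_const_le_real measurableSet_Ioc (by simp) hbound
        ((integrableOn_cylinderIntegrand hp t).mono_set hsub)
    _ ≤ cylinderIntegral p t :=
      setIntegral_mono_set (integrableOn_cylinderIntegrand hp t)
        ((ae_restrict_mem measurableSet_Ioi).mono fun u hu => (cylinderIntegrand_pos p t hu).le)
        hsub.eventuallyLE

lemma hasDerivAt_cylinderIntegral (hp : -1 < p) (t₀ : ℝ) :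
    HasDerivAt (cylinderIntegral p) (cylinderIntegral (p + 1) t₀) t₀ := by
  have hp' : -1 < p + 1 := by linarith
  refine (hasDerivAt_integral_of_dominated_loc_of_deriv_le (Metric.ball_mem_nhds t₀ one_pos)
    (Eventually.of_forall fun t => (measurable_cylinderIntegrand p t).aestronglyMeasurable)
    (integrableOn_cylinderIntegrand hp t₀)
    (measurable_cylinderIntegrand (p + 1) t₀).aestronglyMeasurable ?_
    (integrableOn_cylinderIntegrand hp' (|t₀| + 1)) ?_).2
  · filter_upwards [ae_restrict_mem measurableSet_Ioi] with u (hu : 0 < u) t ht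
    rw [norm_of_nonneg (cylinderIntegrand_pos _ t hu).le, cylinderIntegrand, cylinderIntegrand]
    have htu : t ≤ |t₀| + 1 := by
      linarith [(abs_lt.1 (Real.dist_eq t t₀ ▸ Metric.mem_ball.1 ht)).2, le_abs_self t₀]
    gcongr
  · filter_upwards [ae_restrict_mem measurableSet_Ioi] with u (hu : 0 < u) t _
    have h := (((hasDerivAt_id t).mul_const u).sub_const (u ^ 2 / 2)).exp.const_mul (u ^ p)
    rwa [show u ^ p * (exp (id t * u - u ^ 2 / 2) * (1 * u)) = cylinderIntegrand (p + 1) t u by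
      rw [cylinderIntegrand, rpow_add_one hu.ne', id, one_mul]; ring] at h

lemma HasDerivAt.cylinderIntegral (hp : -1 < p) {f : ℝ → ℝ} {f' x : ℝ}
    (hf : HasDerivAt f f' x) :
    HasDerivAt (fun y => cylinderIntegral p (f y)) (f' * cylinderIntegral (p + 1) (f x)) x := by
  rw [mul_comm]
  exact (hasDerivAt_cylinderIntegral hp (f x)).comp x hf

lemma tendsto_exp_div_cylinderIntegral (hp : -1 < p) {k : ℝ} (hk : 0 < k) (θ : ℝ) :
    Tendsto (fun x => exp x / cylinderIntegral p (k * (x - θ))) atTop (𝓝 0) := by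
  obtain ⟨m, hm, hle⟩ := exists_exp_mul_le_cylinderIntegral hp (c := 2 / k) (by positivity)
  have hlim : Tendsto (fun x => exp (2 * θ) / m * exp (-x)) atTop (𝓝 0) := by
    simpa using tendsto_exp_neg_atTop_nhds_zero.const_mul (exp (2 * θ) / m)
  refine tendsto_of_tendsto_of_tendsto_of_le_of_le' tendsto_const_nhds hlim
    (Eventually.of_forall fun x => (div_pos (exp_pos x) (cylinderIntegral_pos hp _)).le) ?_
  filter_upwards [eventually_ge_atTop θ] with x hx
  have hJ := hle (k * (x - θ)) (mul_nonneg hk.le (sub_nonneg.2 hx))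
  rw [show 2 / k * (k * (x - θ)) = 2 * (x - θ) by field_simp] at hJ
  calc exp x / cylinderIntegral p (k * (x - θ)) ≤ exp x / (m * exp (2 * (x - θ))) := by
        gcongr
    _ = exp (2 * θ) / m * exp (-x) := by
        rw [div_mul_eq_mul_div, ← exp_add, div_eq_div_iff (by positivity) hm.ne', mul_comm m,
          ← mul_assoc, ← exp_add]
        ring_nf

end CylinderIntegral

theorem stmt11_general
    (μ σ θ r c_s : ℝ)
    (hμ : 0 < μ) (hσ : 0 < σ) (hr : 0 < r) (hcs : 0 < c_s)
    (F G : ℝ → ℝ)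
    (hF : ∀ x : ℝ, F x = ∫ u in Ioi (0:ℝ),
        u ^ (r / μ - 1) * Real.exp (Real.sqrt (2 * μ / σ ^ 2) * (x - θ) * u - u ^ 2 / 2))
    (hG : ∀ x : ℝ, G x = ∫ u in Ioi (0:ℝ),
        u ^ (r / μ - 1) * Real.exp (Real.sqrt (2 * μ / σ ^ 2) * (θ - x) * u - u ^ 2 / 2))
    (ψ : ℝ → ℝ) (hψ : ∀ x, ψ x = F x / G x)
    (ψinv : ℝ → ℝ)
    (hinv_right : ∀ z : ℝ, 0 < z → ψ (ψinv z) = z)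
    (H : ℝ → ℝ)
    (hH : ∀ z : ℝ, 0 < z → H z = (Real.exp (ψinv z) - c_s) / G (ψinv z)) :
    Filter.Tendsto (deriv H) Filter.atTop (nhds 0) := by
  set k := √(2 * μ / σ ^ 2)
  have hk : 0 < k := sqrt_pos.2 (by positivity)
  set p := r / μ - 1
  have hp : -1 < p := by have := div_pos hr hμ; linarith
  have hp' : -1 < p + 1 := by linarith
  have hFJ : F = fun x => cylinderIntegral p (k * (x - θ)) := funext hF
  have hGJ : G = fun x => cylinderIntegral p (k * (θ - x)) := funext hG
  subst hFJ hGJ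
  have hJ : ∀ t, 0 < cylinderIntegral p t := cylinderIntegral_pos hp
  have hkJ' : ∀ t, 0 < k * cylinderIntegral (p + 1) t := fun t =>
    mul_pos hk (cylinderIntegral_pos hp' t)
  refine tendsto_deriv_exp_sub_div_comp_rightInverse
    (F' := fun x => k * cylinderIntegral (p + 1) (k * (x - θ)))
    (G' := fun x => -(k * cylinderIntegral (p + 1) (k * (θ - x)))) hcs.le (fun x => ?_) (fun x => ?_)
    (fun _ => hJ _) (fun _ => hJ _) (fun _ => hkJ' _) (fun _ => neg_neg_of_pos (hkJ' _))
    hψ hinv_right hH (tendsto_exp_div_cylinderIntegral hp hk θ) ?_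
  · simpa using (((hasDerivAt_id' x).sub_const θ).const_mul k).cylinderIntegral hp
  · simpa using (((hasDerivAt_id' x).const_sub θ).const_mul k).cylinderIntegral hp
  · have h := (tendsto_exp_div_cylinderIntegral hp' hk θ).div_const k
    rw [zero_div] at h
    exact h.congr fun x => by rw [div_div, mul_comm]

/-- H'(z) → 0 as z → +∞. -/
theorem stmt11
    (μ σ θ r c_s c_b : ℝ)
    (hμ : 0 < μ) (hσ : 0 < σ) (hr : 0 < r) (hcs : 0 < c_s) (hcb : 0 < c_b)
    (F G : ℝ → ℝ)
    (hF : ∀ x : ℝ, F x = ∫ u in Ioi (0:ℝ),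
        u ^ (r / μ - 1) * Real.exp (Real.sqrt (2 * μ / σ ^ 2) * (x - θ) * u - u ^ 2 / 2))
    (hG : ∀ x : ℝ, G x = ∫ u in Ioi (0:ℝ),
        u ^ (r / μ - 1) * Real.exp (Real.sqrt (2 * μ / σ ^ 2) * (θ - x) * u - u ^ 2 / 2))
    (ψ : ℝ → ℝ) (hψ : ∀ x, ψ x = F x / G x)
    (ψinv : ℝ → ℝ)
    (hinv_left : ∀ x : ℝ, ψinv (ψ x) = x)
    (hinv_right : ∀ z : ℝ, 0 < z → ψ (ψinv z) = z)
    (H : ℝ → ℝ)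
    (hH : ∀ z : ℝ, 0 < z → H z = (Real.exp (ψinv z) - c_s) / G (ψinv z))
    (hH0 : H 0 = 0) :
    Filter.Tendsto (deriv H) Filter.atTop (nhds 0) :=
  stmt11_general μ σ θ r c_s hμ hσ hr hcs F G hF hG ψ hψ ψinv hinv_right H hH
end
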